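/- arXiv:2005.08238 — 4 statements merged into one kernel-verified Lean document; each statement's English description precedes it below -/
import Mathlib

section
/- Let p12 ∈ (0,1), p21r ∈ [0,1] and δ ≥ 0 with D := p12·p21r + δ·(1−p12)·(1−p21r) > 0, and set p12d = p12·p21r / D. Then p12d > p12 if and only if p21r > δ/(1+δ). -/
/-- When dual learning outperforms the vanilla translator:
p12d = p12·p21r / (p12·p21r + δ(1−p12)(1−p21r)) > p12 iff p21r > δ/(1+δ). -/
theorem dual_beats_vanilla_iff
    (p12 p21r δ p12d : ℝ)
    (hp12 : p12 ∈ Set.Ioo (0:ℝ) 1) (hp21r : p21r ∈ Set.Icc (0:ℝ) 1)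
    (hδ : δ ≥ 0)
    (hD : p12 * p21r + δ * (1 - p12) * (1 - p21r) > 0)
    (hp : p12d = p12 * p21r / (p12 * p21r + δ * (1 - p12) * (1 - p21r))) :
    p12d > p12 ↔ p21r > δ / (1 + δ) := by
  obtain ⟨h1, h2⟩ := hp12
  obtain ⟨h3, h4⟩ := hp21r
  have hδ1 : (0:ℝ) < 1 + δ := by linarith
  rw [hp, gt_iff_lt, lt_div_iff₀ hD, gt_iff_lt, div_lt_iff₀ hδ1]
  constructor <;> intro h <;> nlinarith [mul_pos h1 (sub_pos.mpr h2)]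
end

section
/- Let q12 ∈ (0,1], q23, q31 ∈ [0,1], δ ≥ 0, set X = q12·(q23·q31 + δ·(1−q23)·(1−q31)) and Y = δ·(1−q12)·(1−q23·q31), and assume q23·q31 + δ·(1−q23)·(1−q31) > 0. Let α', β', γ' be reals with α' + β' + γ' = 1 and α'·Y = β'·X, and suppose q12m = X + α'·(1 − X − Y). Then q12m = (1 − Γ')/(1 + M·(1−q12)/q12), where M = δ·(1−q23·q31)/(q23·q31 + δ·(1−q23)·(1−q31)) and Γ' = γ'·(1 − X − Y). -/
/-- Simplified multi-step dual learning accuracy under λ1 = λ2 = 0 and the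
proportional-redistribution hypothesis. -/
theorem multistep_accuracy_simplified
    (q12 q23 q31 δ α' β' γ' q12m X Y : ℝ)
    (hq12 : q12 ∈ Set.Ioc (0:ℝ) 1)
    (hq23 : q23 ∈ Set.Icc (0:ℝ) 1) (hq31 : q31 ∈ Set.Icc (0:ℝ) 1)
    (hδ : δ ≥ 0)
    (hX : X = q12 * (q23 * q31 + δ * (1 - q23) * (1 - q31)))
    (hY : Y = δ * (1 - q12) * (1 - q23 * q31))
    (hD : q23 * q31 + δ * (1 - q23) * (1 - q31) > 0)
    (hsum : α' + β' + γ' = 1) (hprop : α' * Y = β' * X)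
    (hq : q12m = X + α' * (1 - X - Y)) :
    q12m = (1 - γ' * (1 - X - Y))
        / (1 + (δ * (1 - q23 * q31) / (q23 * q31 + δ * (1 - q23) * (1 - q31)))
            * ((1 - q12) / q12)) := by
  obtain ⟨hq12pos, hq12le⟩ := hq12
  have hXpos : X > 0 := by rw [hX]; exact mul_pos hq12pos hD
  have hq2331 : q23 * q31 ≤ 1 :=
    mul_le_one₀ hq23.2 hq31.1 hq31.2
  have hYnn : Y ≥ 0 := by
    rw [hY]
    apply mul_nonneg (mul_nonneg hδ (by linarith)) (by linarith)
  have hXY : X + Y > 0 := by linarith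
  have hden : 1 + (δ * (1 - q23 * q31) / (q23 * q31 + δ * (1 - q23) * (1 - q31)))
      * ((1 - q12) / q12) = (X + Y) / X := by
    rw [hX, hY]
    field_simp
  rw [hden, div_div_eq_mul_div, eq_div_iff hXY.ne', hq]
  have hα : α' * (X + Y) = (1 - γ') * X := by
    have : α' + β' = 1 - γ' := by linarith
    nlinarith [hprop]
  linear_combination (1 - X - Y) * hα
end

section
/- Let δ ≥ 0 and q23, q31 ∈ (0,1] with q23 > δ/(δ + 1/2) and q31 > δ/(δ + 1/2). Then M := δ·(1−q23·q31)/(q23·q31 + δ·(1−q23)·(1−q31)) < 1. -/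
/-- The mild sufficient condition q23, q31 > δ/(δ + 1/2) implies M < 1. -/
theorem M_lt_one_of_mild_condition
    (δ q23 q31 : ℝ) (hδ : δ ≥ 0)
    (hq23 : q23 ∈ Set.Ioc (0:ℝ) 1) (hq31 : q31 ∈ Set.Ioc (0:ℝ) 1)
    (h23 : q23 > δ / (δ + 1 / 2)) (h31 : q31 > δ / (δ + 1 / 2)) :
    δ * (1 - q23 * q31) / (q23 * q31 + δ * (1 - q23) * (1 - q31)) < 1 := by
  obtain ⟨h23p, h23le⟩ := hq23
  obtain ⟨h31p, h31le⟩ := hq31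
  have hd : (0:ℝ) < δ + 1 / 2 := by linarith
  have e23 : δ < q23 * (δ + 1 / 2) := (div_lt_iff₀ hd).mp h23
  have e31 : δ < q31 * (δ + 1 / 2) := (div_lt_iff₀ hd).mp h31
  have hden : 0 < q23 * q31 + δ * (1 - q23) * (1 - q31) := by
    have := mul_pos h23p h31p
    nlinarith [mul_nonneg (mul_nonneg hδ (by linarith : (0:ℝ) ≤ 1 - q23)) (by linarith : (0:ℝ) ≤ 1 - q31)]
  rw [div_lt_one hden]
  nlinarith [mul_pos h23p h31p, mul_lt_mul_of_pos_left e31 h23p, mul_lt_mul_of_pos_left e23 h31p]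
end

section
/- Let δ ≥ 0, q12 ∈ (0,1), and q23, q31 ∈ (0,1] with q23 > δ/(δ + 1/2) and q31 > δ/(δ + 1/2). Set M = δ·(1−q23·q31)/(q23·q31 + δ·(1−q23)·(1−q31)) and q12m = 1/(1 + M·(1−q12)/q12). Then q12m > q12. -/
/-- Multi-step dual learning outperforms standard dual learning under the
mild condition q23, q31 > δ/(δ + 1/2). -/
theorem multistep_beats_dual
    (δ q12 q23 q31 M q12m : ℝ) (hδ : δ ≥ 0)
    (hq12 : q12 ∈ Set.Ioo (0:ℝ) 1)
    (hq23 : q23 ∈ Set.Ioc (0:ℝ) 1) (hq31 : q31 ∈ Set.Ioc (0:ℝ) 1)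
    (h23 : q23 > δ / (δ + 1 / 2)) (h31 : q31 > δ / (δ + 1 / 2))
    (hM : M = δ * (1 - q23 * q31) / (q23 * q31 + δ * (1 - q23) * (1 - q31)))
    (hq : q12m = 1 / (1 + M * ((1 - q12) / q12))) :
    q12m > q12 := by
  obtain ⟨h12a, h12b⟩ := hq12
  obtain ⟨h23a, h23b⟩ := hq23
  obtain ⟨h31a, h31b⟩ := hq31
  have hhalf : (0:ℝ) < δ + 1/2 := by linarith
  have hd23 : δ * (1 - q23) < q23 / 2 := by
    have := (div_lt_iff₀ hhalf).mp h23
    nlinarith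
  have hd31 : δ * (1 - q31) < q31 / 2 := by
    have := (div_lt_iff₀ hhalf).mp h31
    nlinarith
  have hD : 0 < q23 * q31 + δ * (1 - q23) * (1 - q31) := by nlinarith
  have hM1 : M < 1 := by
    rw [hM, div_lt_one hD]
    nlinarith [mul_lt_mul_of_pos_right hd23 h31a, mul_lt_mul_of_pos_right hd31 h23a]
  have hM0 : 0 ≤ M := by
    rw [hM]
    apply div_nonneg _ hD.le
    have : q23 * q31 ≤ 1 := by nlinarith
    exact mul_nonneg hδ (by linarith)
  have ht0 : 0 ≤ M * ((1 - q12) / q12) := mul_nonneg hM0 (div_nonneg (by linarith) h12a.le)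
  have hpos : 0 < 1 + M * ((1 - q12) / q12) := by linarith
  rw [hq, gt_iff_lt, lt_div_iff₀ hpos]
  have hkey : q12 * (M * ((1 - q12) / q12)) = M * (1 - q12) := by
    field_simp
  nlinarith
end
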